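/- For integers m, u, p ≥ 1 and n, v ≥ 0, one has z_m z_p^n ⋆_t z_u z_p^v = Σ_{i=1}^{n} z_m { z_p^i z_u + (1−2t) z_p^{i−1} z_{u+p} + (1 − δ_{v,0} δ_{n,i}) (t²−t) z_p^{i−1} x^{u+p} } (z_p^v ⋆_t z_p^{n−i}) + Σ_{i=1}^{v} z_u { z_p^i z_m + (1−2t) z_p^{i−1} z_{m+p} + (1 − δ_{n,0} δ_{v,i}) (t²−t) z_p^{i−1} x^{m+p} } (z_p^n ⋆_t z_p^{v−i}) + { z_m z_u + z_u z_m + (1−2t) z_{m+u} + (1 − δ_{n,0} δ_{v,0}) (t²−t) x^{m+u} } (z_p^n ⋆_t z_p^v), where δ_{i,j} denotes the Kronecker delta. -/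
import Mathlib


/- ℍ_t = ℚ[t]⟨x,y⟩, z_k = x^{k-1}y, and the t-stuffle product ⋆_t on the word
basis of ℍ¹_t (a ℚ[t]-bilinear map is determined by its values on words). -/

noncomputable section

open Polynomial Finset

abbrev R : Type := Polynomial ℚ
abbrev A : Type := FreeAlgebra R Bool

def Xg : A := FreeAlgebra.ι R false
def Yg : A := FreeAlgebra.ι R true
def tp : R := Polynomial.X

/-- `z k = x^(k-1) y`. -/
def z (k : ℕ) : A := Xg ^ (k - 1) * Yg

/-- The word `z_{k₁} ⋯ z_{kₙ}`. -/
def zw (w : List ℕ) : A := (w.map z).prod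

/-- The t-stuffle product, given on the word basis of ℍ¹_t. -/
def tst : List ℕ → List ℕ → A
  | [], w => zw w
  | k :: w₁, [] => zw (k :: w₁)
  | k :: w₁, l :: w₂ =>
      z k * tst w₁ (l :: w₂) + z l * tst (k :: w₁) w₂
        + (1 - 2 * tp) • (z (k + l) * tst w₁ w₂)
        + (if w₁ = [] ∧ w₂ = [] then (0 : R) else tp ^ 2 - tp) • (Xg ^ (k + l) * tst w₁ w₂)
  termination_by w₁ w₂ => w₁.length + w₂.length


lemma tst_nil_left (w : List ℕ) : tst [] w = zw w := by rw [tst]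

lemma tst_nil_right (w : List ℕ) : tst w [] = zw w := by
  cases w with
  | nil => rw [tst]
  | cons k w => rw [tst]

lemma tst_cons (k l : ℕ) (w₁ w₂ : List ℕ) :
    tst (k :: w₁) (l :: w₂) =
      z k * tst w₁ (l :: w₂) + z l * tst (k :: w₁) w₂
        + (1 - 2 * tp) • (z (k + l) * tst w₁ w₂)
        + (if w₁ = [] ∧ w₂ = [] then (0 : R) else tp ^ 2 - tp) • (Xg ^ (k + l) * tst w₁ w₂) := by
  rw [tst]
lemma tst_comm : ∀ w₁ w₂ : List ℕ, tst w₁ w₂ = tst w₂ w₁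
  | [], w₂ => by rw [tst_nil_left, tst_nil_right]
  | k :: w₁, [] => by rw [tst_nil_left, tst_nil_right]
  | k :: w₁, l :: w₂ => by
      rw [tst_cons, tst_cons, tst_comm w₁ (l :: w₂), tst_comm (k :: w₁) w₂,
        tst_comm w₁ w₂, Nat.add_comm k l]
      by_cases h1 : w₁ = [] <;> by_cases h2 : w₂ = [] <;> simp [h1, h2] <;> abel
  termination_by w₁ w₂ => w₁.length + w₂.length

lemma zw_nil : zw ([] : List ℕ) = 1 := rfl

lemma zw_cons (k : ℕ) (w : List ℕ) : zw (k :: w) = z k * zw w := by simp [zw]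

lemma key (u p : ℕ) : ∀ n v : ℕ,
    tst (List.replicate n p) (u :: List.replicate v p) =
      (∑ i ∈ Finset.range n,
        (zw (List.replicate (i + 1) p) * z u
          + (1 - 2 * tp) • (zw (List.replicate i p) * z (u + p))
          + (if v = 0 ∧ n = i + 1 then (0 : R) else tp ^ 2 - tp) •
              (zw (List.replicate i p) * Xg ^ (u + p)))
        * tst (List.replicate v p) (List.replicate (n - 1 - i) p))
      + z u * tst (List.replicate n p) (List.replicate v p)
  | 0, v => by
      simp [tst_nil_left, zw_cons]
  | n + 1, v => by
      rw [show List.replicate (n + 1) p = p :: List.replicate n p from rfl,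
        tst_cons, key u p n v, Finset.sum_range_succ']
      rw [mul_add, Finset.mul_sum]
      have hsum : ∀ i ∈ Finset.range n,
          (zw (List.replicate (i + 1 + 1) p) * z u
            + (1 - 2 * tp) • (zw (List.replicate (i + 1) p) * z (u + p))
            + (if v = 0 ∧ n + 1 = i + 1 + 1 then (0 : R) else tp ^ 2 - tp) •
                (zw (List.replicate (i + 1) p) * Xg ^ (u + p)))
          * tst (List.replicate v p) (List.replicate (n + 1 - 1 - (i + 1)) p)
          = z p * ((zw (List.replicate (i + 1) p) * z u
            + (1 - 2 * tp) • (zw (List.replicate i p) * z (u + p))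
            + (if v = 0 ∧ n = i + 1 then (0 : R) else tp ^ 2 - tp) •
                (zw (List.replicate i p) * Xg ^ (u + p)))
          * tst (List.replicate v p) (List.replicate (n - 1 - i) p)) := by
        intro i _
        have h1 : n + 1 - 1 - (i + 1) = n - 1 - i := by omega
        rw [h1]
        simp only [show (v = 0 ∧ n + 1 = i + 1 + 1) ↔ (v = 0 ∧ n = i + 1) from by omega]
        rw [show List.replicate (i + 1 + 1) p = p :: List.replicate (i + 1) p from rfl,
          show List.replicate (i + 1) p = p :: List.replicate i p from rfl]
        simp only [zw_cons, add_mul, smul_mul_assoc, mul_add, mul_smul_comm, mul_assoc]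
      rw [Finset.sum_congr rfl hsum]
      simp only [show n + 1 - 1 - 0 = n from rfl]
      rw [tst_comm (List.replicate v p) (List.replicate n p)]
      simp only [show (v = 0 ∧ n + 1 = 0 + 1) ↔
          (List.replicate n p = [] ∧ List.replicate v p = []) from by
        rw [List.replicate_eq_nil_iff, List.replicate_eq_nil_iff]; omega]
      simp only [show (0:ℕ) + 1 = 1 from rfl, show List.replicate 1 p = [p] from rfl,
        show List.replicate 0 p = ([] : List ℕ) from rfl, zw_cons, zw_nil, mul_one, one_mul,
        Nat.add_comm u p, add_mul, smul_mul_assoc, mul_assoc]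
      abel
  termination_by n v => n

/-- Theorem 2: for m, u, p ≥ 1 and n, v ≥ 0. -/
theorem theorem2 (m u p n v : ℕ) (hm : 1 ≤ m) (hu : 1 ≤ u) (hp : 1 ≤ p) :
    tst (m :: List.replicate n p) (u :: List.replicate v p) =
      (∑ i ∈ Finset.Icc 1 n,
        z m * (zw (List.replicate i p) * z u
            + (1 - 2 * tp) • (zw (List.replicate (i - 1) p) * z (u + p))
            + (if v = 0 ∧ n = i then (0 : R) else tp ^ 2 - tp) •
                (zw (List.replicate (i - 1) p) * Xg ^ (u + p)))
          * tst (List.replicate v p) (List.replicate (n - i) p))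
      + (∑ i ∈ Finset.Icc 1 v,
        z u * (zw (List.replicate i p) * z m
            + (1 - 2 * tp) • (zw (List.replicate (i - 1) p) * z (m + p))
            + (if n = 0 ∧ v = i then (0 : R) else tp ^ 2 - tp) •
                (zw (List.replicate (i - 1) p) * Xg ^ (m + p)))
          * tst (List.replicate n p) (List.replicate (v - i) p))
      + (z m * z u + z u * z m + (1 - 2 * tp) • z (m + u)
          + (if n = 0 ∧ v = 0 then (0 : R) else tp ^ 2 - tp) • Xg ^ (m + u))
        * tst (List.replicate n p) (List.replicate v p) := by
  rw [tst_cons, key u p n v, tst_comm (m :: List.replicate n p) (List.replicate v p),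
    key m p v n, tst_comm (List.replicate v p) (List.replicate n p)]
  simp only [show (List.replicate n p = [] ∧ List.replicate v p = []) ↔ (n = 0 ∧ v = 0) from by
    rw [List.replicate_eq_nil_iff, List.replicate_eq_nil_iff]]
  rw [← Finset.Ico_add_one_right_eq_Icc 1 n, ← Finset.Ico_add_one_right_eq_Icc 1 v, Finset.sum_Ico_eq_sum_range, Finset.sum_Ico_eq_sum_range]
  simp only [show n + 1 - 1 = n from rfl, show v + 1 - 1 = v from rfl]
  have hs1 : ∀ i ∈ Finset.range n,
      z m * (zw (List.replicate (1 + i) p) * z u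
          + (1 - 2 * tp) • (zw (List.replicate (1 + i - 1) p) * z (u + p))
          + (if v = 0 ∧ n = 1 + i then (0 : R) else tp ^ 2 - tp) •
              (zw (List.replicate (1 + i - 1) p) * Xg ^ (u + p)))
        * tst (List.replicate v p) (List.replicate (n - (1 + i)) p)
      = z m * ((zw (List.replicate (i + 1) p) * z u
          + (1 - 2 * tp) • (zw (List.replicate i p) * z (u + p))
          + (if v = 0 ∧ n = i + 1 then (0 : R) else tp ^ 2 - tp) •
              (zw (List.replicate i p) * Xg ^ (u + p)))
        * tst (List.replicate v p) (List.replicate (n - 1 - i) p)) := by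
    intro i _
    rw [show 1 + i - 1 = i from by omega, show n - (1 + i) = n - 1 - i from by omega,
      show 1 + i = i + 1 from by omega, mul_assoc]
  have hs2 : ∀ i ∈ Finset.range v,
      z u * (zw (List.replicate (1 + i) p) * z m
          + (1 - 2 * tp) • (zw (List.replicate (1 + i - 1) p) * z (m + p))
          + (if n = 0 ∧ v = 1 + i then (0 : R) else tp ^ 2 - tp) •
              (zw (List.replicate (1 + i - 1) p) * Xg ^ (m + p)))
        * tst (List.replicate n p) (List.replicate (v - (1 + i)) p)
      = z u * ((zw (List.replicate (i + 1) p) * z m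
          + (1 - 2 * tp) • (zw (List.replicate i p) * z (m + p))
          + (if n = 0 ∧ v = i + 1 then (0 : R) else tp ^ 2 - tp) •
              (zw (List.replicate i p) * Xg ^ (m + p)))
        * tst (List.replicate n p) (List.replicate (v - 1 - i) p)) := by
    intro i _
    rw [show 1 + i - 1 = i from by omega, show v - (1 + i) = v - 1 - i from by omega,
      show 1 + i = i + 1 from by omega, mul_assoc]
  rw [Finset.sum_congr rfl hs1, Finset.sum_congr rfl hs2]
  simp only [mul_add, Finset.mul_sum, add_mul, smul_mul_assoc, mul_assoc,
    Nat.add_comm u m]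
  abel
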